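/- Let A ⊂ ℝᵖ be a self-similar fractal fixed under M ≥ 2 similitudes with common contraction ratio r, with diam(A) = 1, pairwise image separation σ > 0, d = log M/log(1/r), and suppose R := (r/σ)(1+r^d)^{1/d} < 1. Then for every s ≥ max{2d, log_{1/R}[2M(M+1)]}, we have limsup_{k→∞} ℰ_s(A, M^{k+1})/(M^{k+1})^{1+s/d} < liminf_{k→∞} ℰ_s(A, M^{k+1}+M^k)/(M^{k+1}+M^k)^{1+s/d}; in particular liminf_{N→∞} ℰ_s(A,N)/N^{1+s/d} < limsup_{N→∞} ℰ_s(A,N)/N^{1+s/d}, so the limit of ℰ_s(A,N)/N^{1+s/d} does not exist. -/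

import Mathlib

open Filter MeasureTheory Metric Real
open scoped BigOperators ENNReal NNReal Topology

open Classical in
noncomputable def rieszEnergy {E : Type*} [PseudoMetricSpace E] (s : ℝ) (ω : Finset E) : ℝ :=
  ∑ x ∈ ω, ∑ y ∈ ω, if x ≠ y then dist x y ^ (-s) else 0

noncomputable def minRieszEnergy {E : Type*} [PseudoMetricSpace E] (s : ℝ) (A : Set E) (N : ℕ) : ℝ :=
  sInf {e : ℝ | ∃ ω : Finset E, ↑ω ⊆ A ∧ ω.card = N ∧ e = rieszEnergy s ω}

section aux
variable {E : Type*} [PseudoMetricSpace E] {s : ℝ} {A : Set E}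

set_option linter.unusedSectionVars false

lemma rieszEnergy_nonneg (s : ℝ) (ω : Finset E) : 0 ≤ rieszEnergy s ω := by
  unfold rieszEnergy
  refine Finset.sum_nonneg fun x _ => Finset.sum_nonneg fun y _ => ?_
  split_ifs
  · exact Real.rpow_nonneg dist_nonneg _
  · exact le_rfl

lemma rieszEnergy_mono (s : ℝ) {ω₁ ω₂ : Finset E} (h : ω₁ ⊆ ω₂) :
    rieszEnergy s ω₁ ≤ rieszEnergy s ω₂ := by
  classical
  unfold rieszEnergy
  have hnn : ∀ x y : E, 0 ≤ (if x ≠ y then dist x y ^ (-s) else 0) := by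
    intro x y; split_ifs
    · exact Real.rpow_nonneg dist_nonneg _
    · exact le_rfl
  calc (∑ x ∈ ω₁, ∑ y ∈ ω₁, if x ≠ y then dist x y ^ (-s) else 0)
      ≤ ∑ x ∈ ω₁, ∑ y ∈ ω₂, if x ≠ y then dist x y ^ (-s) else 0 := by
        refine Finset.sum_le_sum fun x _ => ?_
        exact Finset.sum_le_sum_of_subset_of_nonneg h (fun y _ _ => hnn x y)
    _ ≤ ∑ x ∈ ω₂, ∑ y ∈ ω₂, if x ≠ y then dist x y ^ (-s) else 0 := by
        refine Finset.sum_le_sum_of_subset_of_nonneg h fun x _ _ => ?_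
        exact Finset.sum_nonneg fun y _ => hnn x y

lemma minRieszEnergy_bddBelow (s : ℝ) (A : Set E) (N : ℕ) :
    BddBelow {e : ℝ | ∃ ω : Finset E, ↑ω ⊆ A ∧ ω.card = N ∧ e = rieszEnergy s ω} := by
  refine ⟨0, fun e he => ?_⟩
  obtain ⟨ω, -, -, rfl⟩ := he
  exact rieszEnergy_nonneg s ω

lemma minRieszEnergy_le {ω : Finset E} (hω : ↑ω ⊆ A) {N : ℕ} (hcard : ω.card = N) :
    minRieszEnergy s A N ≤ rieszEnergy s ω :=
  csInf_le (minRieszEnergy_bddBelow s A N) ⟨ω, hω, hcard, rfl⟩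

lemma exists_config (hA : A.Infinite) (N : ℕ) :
    ∃ ω : Finset E, ↑ω ⊆ A ∧ ω.card = N := by
  obtain ⟨t, hts, htfin, htcard⟩ := hA.exists_subset_ncard_eq N
  refine ⟨htfin.toFinset, by simpa using hts, ?_⟩
  rw [← Set.ncard_coe_finset]
  simpa using htcard

lemma le_minRieszEnergy (hA : A.Infinite) {N : ℕ} {b : ℝ}
    (h : ∀ ω : Finset E, ↑ω ⊆ A → ω.card = N → b ≤ rieszEnergy s ω) :
    b ≤ minRieszEnergy s A N := by
  obtain ⟨ω, hω, hcard⟩ := exists_config hA N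
  refine le_csInf ⟨rieszEnergy s ω, ω, hω, hcard, rfl⟩ ?_
  rintro e ⟨ω', hω', hcard', rfl⟩
  exact h ω' hω' hcard'

lemma minRieszEnergy_nonneg (s : ℝ) (A : Set E) (N : ℕ) (h : A.Infinite) :
    0 ≤ minRieszEnergy s A N :=
  le_minRieszEnergy h fun ω _ _ => rieszEnergy_nonneg s ω

lemma minRieszEnergy_mono (hA : A.Infinite) {N₁ N₂ : ℕ} (h : N₁ ≤ N₂) :
    minRieszEnergy s A N₁ ≤ minRieszEnergy s A N₂ := by
  obtain ⟨ω, hω, hcard⟩ := exists_config hA N₂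
  refine le_csInf ⟨rieszEnergy s ω, ω, hω, hcard, rfl⟩ ?_
  rintro e ⟨ω', hω', hcard', rfl⟩
  obtain ⟨ω'', hsub, hcard''⟩ := Finset.exists_subset_card_eq (hcard' ▸ h : N₁ ≤ ω'.card)
  exact le_trans (minRieszEnergy_le (fun x hx => hω' (hsub hx)) hcard'')
    (rieszEnergy_mono s hsub)

end aux

section geom
variable {E : Type*} [MetricSpace E]
set_option linter.unusedSectionVars false

/-- level-`n` cells of the self-similar construction -/
def cells {M : ℕ} (ψ : Fin M → E → E) (A : Set E) : (n : ℕ) → (Fin n → Fin M) → Set E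
  | 0, _ => A
  | n+1, w => ψ (w 0) '' cells ψ A n (w ∘ Fin.succ)

lemma cells_subset {M : ℕ} {ψ : Fin M → E → E} {A : Set E}
    (hinv : ∀ m, ψ m '' A ⊆ A) : ∀ n w, cells ψ A n w ⊆ A
  | 0, _ => subset_rfl
  | n+1, w => by
      rintro x ⟨y, hy, rfl⟩
      exact hinv _ ⟨y, cells_subset hinv n _ hy, rfl⟩

lemma cells_cover {M : ℕ} {ψ : Fin M → E → E} {A : Set E}
    (hfix : ∀ x ∈ A, ∃ m, x ∈ ψ m '' A) :
    ∀ n, ∀ x ∈ A, ∃ w : Fin n → Fin M, x ∈ cells ψ A n w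
  | 0, x, hx => ⟨fun i => i.elim0, hx⟩
  | n+1, x, hx => by
      obtain ⟨m, y, hy, rfl⟩ := hfix x hx
      obtain ⟨w, hw⟩ := cells_cover hfix n y hy
      refine ⟨Fin.cons m w, ?_⟩
      have hc : (Fin.cons m w ∘ Fin.succ : Fin n → Fin M) = w := by
        ext i; simp
      simp only [cells, Fin.cons_zero, hc]
      exact ⟨y, hw, rfl⟩

lemma cells_diam {M : ℕ} {ψ : Fin M → E → E} {A : Set E}
    (hA : Bornology.IsBounded A) (hinv : ∀ m, ψ m '' A ⊆ A)
    {r : ℝ} (hr : 0 ≤ r) (hψ : ∀ m x y, dist (ψ m x) (ψ m y) = r * dist x y) :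
    ∀ n w, Metric.diam (cells ψ A n w) ≤ r ^ n * Metric.diam A
  | 0, _ => by simp [cells]
  | n+1, w => by
      have hb : Bornology.IsBounded (cells ψ A n (w ∘ Fin.succ)) :=
        hA.subset (cells_subset hinv n _)
      have ih := cells_diam hA hinv hr hψ n (w ∘ Fin.succ)
      have key : Metric.diam (ψ (w 0) '' cells ψ A n (w ∘ Fin.succ)) ≤
          r * (r ^ n * Metric.diam A) := by
        apply Metric.diam_le_of_forall_dist_le
        · have := Metric.diam_nonneg (s := A)
          positivity
        · rintro x ⟨a, ha, rfl⟩ y ⟨b, hb2, rfl⟩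
          rw [hψ]
          calc r * dist a b ≤ r * Metric.diam (cells ψ A n (w ∘ Fin.succ)) :=
                mul_le_mul_of_nonneg_left (Metric.dist_le_diam_of_mem hb ha hb2) hr
            _ ≤ r * (r ^ n * Metric.diam A) := mul_le_mul_of_nonneg_left ih hr
      simp only [cells]
      calc Metric.diam (ψ (w 0) '' cells ψ A n (w ∘ Fin.succ)) ≤
            r * (r ^ n * Metric.diam A) := key
        _ = r ^ (n+1) * Metric.diam A := by ring

end geom

/-- counting: number of ordered distinct pairs in the same fiber -/
lemma fiber_count {E W : Type*} [DecidableEq E] [DecidableEq W] [Fintype W] (ω : Finset E) (g : E → W) :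
    2 * ((ω.card : ℝ) - (Fintype.card W : ℝ)) ≤
      ∑ x ∈ ω, ∑ y ∈ ω, (if x ≠ y ∧ g x = g y then (1:ℝ) else 0) := by
  set c : W → ℕ := fun w => ((ω.filter fun x => g x = w).card) with hc
  have inner : ∀ x ∈ ω, (∑ y ∈ ω, (if x ≠ y ∧ g x = g y then (1:ℝ) else 0)) =
      (c (g x) : ℝ) - 1 := by
    intro x hx
    have hsplit : ∀ y ∈ ω, (if x ≠ y ∧ g x = g y then (1:ℝ) else 0) =
        (if g y = g x then (1:ℝ) else 0) - (if y = x then (1:ℝ) else 0) := by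
      intro y _
      by_cases h1 : y = x
      · subst h1; simp
      · by_cases h2 : g y = g x
        · rw [if_pos (⟨fun h => h1 h.symm, h2.symm⟩ : x ≠ y ∧ g x = g y),
            if_pos h2, if_neg h1]
          norm_num
        · rw [if_neg (fun hh : x ≠ y ∧ g x = g y => h2 hh.2.symm), if_neg h2, if_neg h1]
          norm_num
    rw [Finset.sum_congr rfl hsplit, Finset.sum_sub_distrib]
    have e1 : (∑ y ∈ ω, (if g y = g x then (1:ℝ) else 0)) = (c (g x) : ℝ) := by
      rw [Finset.sum_boole]
    have e2 : (∑ y ∈ ω, (if y = x then (1:ℝ) else 0)) = 1 := by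
      rw [Finset.sum_ite_eq' ω x (fun _ => (1:ℝ))]
      simp [hx]
    rw [e1, e2]
  rw [Finset.sum_congr rfl inner, Finset.sum_sub_distrib, Finset.sum_const]
  have fib : (∑ x ∈ ω, (c (g x) : ℝ)) = ∑ w : W, ((c w : ℝ) * (c w : ℝ)) := by
    rw [← Finset.sum_fiberwise ω g (fun x => (c (g x) : ℝ))]
    refine Finset.sum_congr rfl fun w _ => ?_
    have hcong : ∀ x ∈ ω.filter fun x => g x = w, (c (g x) : ℝ) = (c w : ℝ) := by
      intro x hxw
      rw [(Finset.mem_filter.mp hxw).2]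
    rw [Finset.sum_congr rfl hcong, Finset.sum_const]
    simp [hc, mul_comm]
  have cardsum : (ω.card : ℝ) = ∑ w : W, (c w : ℝ) := by
    rw [Finset.card_eq_sum_card_fiberwise (f := g) (t := Finset.univ)
      (fun x _ => Finset.mem_univ _)]
    push_cast
    rfl
  have key : ∀ w : W, 2 * ((c w : ℝ) - 1) ≤ (c w : ℝ) * (c w : ℝ) - (c w : ℝ) := by
    intro w
    rcases Nat.lt_or_ge (c w) 2 with h | h
    · have : c w = 0 ∨ c w = 1 := by omega
      rcases this with h' | h' <;> rw [h'] <;> norm_num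
    · have h2 : (2:ℝ) ≤ (c w : ℝ) := by exact_mod_cast h
      nlinarith
  have hsum : ∑ w : W, 2 * ((c w : ℝ) - 1) ≤
      ∑ w : W, ((c w : ℝ) * (c w : ℝ) - (c w : ℝ)) :=
    Finset.sum_le_sum fun w _ => key w
  have lhs_eq : ∑ w : W, 2 * ((c w : ℝ) - 1) =
      2 * (∑ w : W, (c w : ℝ)) - 2 * (Fintype.card W : ℝ) := by
    simp only [mul_sub, mul_one]
    rw [Finset.sum_sub_distrib, ← Finset.mul_sum, Finset.sum_const, Finset.card_univ,
      nsmul_eq_mul]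
    ring
  have rhs_eq : ∑ w : W, ((c w : ℝ) * (c w : ℝ) - (c w : ℝ)) =
      (∑ w : W, (c w : ℝ) * (c w : ℝ)) - ∑ w : W, (c w : ℝ) :=
    Finset.sum_sub_distrib _ _
  simp only [nsmul_eq_mul, mul_one]
  rw [fib, cardsum]
  linarith

section lower
variable {E : Type*} [MetricSpace E]
set_option linter.unusedSectionVars false

lemma psi_injective {M : ℕ} {ψ : Fin M → E → E} {r : ℝ} (hr : 0 < r)
    (hψ : ∀ m x y, dist (ψ m x) (ψ m y) = r * dist x y) (m : Fin M) :
    Function.Injective (ψ m) := by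
  intro x y h
  have h2 := hψ m x y
  rw [h, dist_self] at h2
  have h3 : dist x y = 0 := (mul_eq_zero.mp h2.symm).resolve_left (ne_of_gt hr)
  exact dist_eq_zero.mp h3

lemma A_infinite {M : ℕ} (hM : 2 ≤ M) {r σ : ℝ} (hr : 0 < r) (hσ : 0 < σ)
    {A : Set E} {ψ : Fin M → E → E}
    (hψ : ∀ m x y, dist (ψ m x) (ψ m y) = r * dist x y)
    (hfix : A = ⋃ m, ψ m '' A)
    (hsep : ∀ i j, i ≠ j → ∀ x ∈ ψ i '' A, ∀ y ∈ ψ j '' A, σ ≤ dist x y)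
    (hne : A.Nonempty) : A.Infinite := by
  by_contra h
  rw [Set.not_infinite] at h
  set i0 : Fin M := ⟨0, by omega⟩
  set i1 : Fin M := ⟨1, by omega⟩
  have hne01 : i0 ≠ i1 := by simp [i0, i1, Fin.ext_iff]
  have hdisj : Disjoint (ψ i0 '' A) (ψ i1 '' A) := by
    rw [Set.disjoint_left]
    intro x hx0 hx1
    have := hsep i0 i1 hne01 x hx0 x hx1
    rw [dist_self] at this
    linarith
  have hinv : ∀ m, ψ m '' A ⊆ A := by
    intro m x hx
    rw [hfix]
    exact Set.mem_iUnion.mpr ⟨m, hx⟩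
  have hsub : ψ i0 '' A ∪ ψ i1 '' A ⊆ A := Set.union_subset (hinv i0) (hinv i1)
  have h1 : (ψ i0 '' A ∪ ψ i1 '' A).ncard ≤ A.ncard := Set.ncard_le_ncard hsub h
  have h2 : (ψ i0 '' A ∪ ψ i1 '' A).ncard = 2 * A.ncard := by
    rw [Set.ncard_union_eq hdisj (h.image _) (h.image _),
      Set.ncard_image_of_injective _ (psi_injective hr hψ i0),
      Set.ncard_image_of_injective _ (psi_injective hr hψ i1)]
    ring
  have h3 : 0 < A.ncard := (Set.ncard_pos h).mpr hne
  omega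

lemma energy_lower {M : ℕ} (hM : 2 ≤ M) {r s : ℝ} (hr : 0 < r) (hs : 0 < s)
    {A : Set E} (hAb : Bornology.IsBounded A) (hdiam : Metric.diam A ≤ 1)
    {ψ : Fin M → E → E}
    (hψ : ∀ m x y, dist (ψ m x) (ψ m y) = r * dist x y)
    (hfix : A = ⋃ m, ψ m '' A)
    (n : ℕ) (ω : Finset E) (hω : ↑ω ⊆ A) :
    2 * ((ω.card : ℝ) - (M:ℝ)^n) * (r ^ n) ^ (-s) ≤ rieszEnergy s ω := by
  classical
  have hinv : ∀ m, ψ m '' A ⊆ A := by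
    intro m x hx
    rw [hfix]
    exact Set.mem_iUnion.mpr ⟨m, hx⟩
  have hcov : ∀ x ∈ A, ∃ m, x ∈ ψ m '' A := by
    intro x hx
    rw [hfix] at hx
    exact Set.mem_iUnion.mp hx
  haveI : Nonempty (Fin M) := ⟨⟨0, by omega⟩⟩
  let g : E → (Fin n → Fin M) := fun x =>
    if h : ∃ w, x ∈ cells ψ A n w then h.choose else Classical.arbitrary _
  have hg : ∀ x ∈ A, x ∈ cells ψ A n (g x) := by
    intro x hx
    have h : ∃ w, x ∈ cells ψ A n w := cells_cover hcov n x hx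
    simp only [g, dif_pos h]
    exact h.choose_spec
  have hpt : ∀ x ∈ ω, ∀ y ∈ ω,
      (if x ≠ y ∧ g x = g y then (1:ℝ) else 0) * (r^n)^(-s) ≤
      (if x ≠ y then dist x y ^ (-s) else 0) := by
    intro x hx y hy
    by_cases hcond : x ≠ y ∧ g x = g y
    · rw [if_pos hcond, if_pos hcond.1, one_mul]
      have hd : dist x y ≤ r ^ n := by
        have h1 : x ∈ cells ψ A n (g x) := hg x (hω hx)
        have h2 : y ∈ cells ψ A n (g x) := hcond.2 ▸ hg y (hω hy)
        calc dist x y ≤ Metric.diam (cells ψ A n (g x)) :=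
              Metric.dist_le_diam_of_mem (hAb.subset (cells_subset hinv n _)) h1 h2
          _ ≤ r ^ n * Metric.diam A := cells_diam hAb hinv hr.le hψ n _
          _ ≤ r ^ n := by nlinarith [pow_pos hr n]
      exact Real.rpow_le_rpow_of_nonpos (dist_pos.mpr hcond.1) hd (neg_nonpos.mpr hs.le)
    · rw [if_neg hcond, zero_mul]
      split_ifs
      · exact Real.rpow_nonneg dist_nonneg _
      · exact le_rfl
  have hsum : (∑ x ∈ ω, ∑ y ∈ ω, (if x ≠ y ∧ g x = g y then (1:ℝ) else 0)) * (r^n)^(-s)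
      ≤ rieszEnergy s ω := by
    unfold rieszEnergy
    rw [Finset.sum_mul]
    refine Finset.sum_le_sum fun x hx => ?_
    rw [Finset.sum_mul]
    exact Finset.sum_le_sum fun y hy => hpt x hx y hy
  refine le_trans ?_ hsum
  apply mul_le_mul_of_nonneg_right _ (Real.rpow_nonneg (by positivity) _)
  have hcard : ((Fintype.card (Fin n → Fin M) : ℕ) : ℝ) = (M:ℝ)^n := by simp
  rw [← hcard]
  exact fiber_count ω g

end lower

section upper
variable {E : Type*} [MetricSpace E]
set_option linter.unusedSectionVars false

lemma energy_upper_base {M : ℕ} (hM : 2 ≤ M) {r σ s : ℝ} (hr : 0 < r) (hσ : 0 < σ)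
    (hs : 0 < s) {A : Set E} {ψ : Fin M → E → E}
    (hψ : ∀ m x y, dist (ψ m x) (ψ m y) = r * dist x y)
    (hfix : A = ⋃ m, ψ m '' A)
    (hsep : ∀ i j, i ≠ j → ∀ x ∈ ψ i '' A, ∀ y ∈ ψ j '' A, σ ≤ dist x y)
    (hne : A.Nonempty) :
    minRieszEnergy s A M ≤ σ^(-s) * (M:ℝ)^2 := by
  classical
  have hinv : ∀ m, ψ m '' A ⊆ A := by
    intro m x hx
    rw [hfix]
    exact Set.mem_iUnion.mpr ⟨m, hx⟩
  have hpts : ∀ m : Fin M, ∃ x, x ∈ ψ m '' A := fun m => hne.image (ψ m)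
  choose pt hpt using hpts
  have hptdist : ∀ i j, i ≠ j → σ ≤ dist (pt i) (pt j) :=
    fun i j hij => hsep i j hij _ (hpt i) _ (hpt j)
  have hptinj : Function.Injective pt := by
    intro i j hij
    by_contra hne'
    have := hptdist i j hne'
    rw [hij, dist_self] at this
    linarith
  set ω : Finset E := Finset.image pt Finset.univ with hω
  have hcard : ω.card = M := by
    rw [hω, Finset.card_image_of_injective _ hptinj, Finset.card_univ, Fintype.card_fin]
  have hsub : ↑ω ⊆ A := by
    intro x hx
    rw [hω] at hx
    simp only [Finset.coe_image, Set.mem_image] at hx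
    obtain ⟨i, -, rfl⟩ := hx
    exact hinv i (hpt i)
  have hbound : rieszEnergy s ω ≤ σ^(-s) * (M:ℝ)^2 := by
    have hterm : ∀ x ∈ ω, ∀ y ∈ ω, (if x ≠ y then dist x y ^ (-s) else 0) ≤ σ^(-s) := by
      intro x hx y hy
      rw [hω] at hx hy
      simp only [Finset.mem_image, Finset.mem_univ, true_and] at hx hy
      obtain ⟨i, rfl⟩ := hx
      obtain ⟨j, rfl⟩ := hy
      split_ifs with hne'
      · have hij : i ≠ j := fun h => hne' (by rw [h])
        exact Real.rpow_le_rpow_of_nonpos hσ (hptdist i j hij) (neg_nonpos.mpr hs.le)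
      · positivity
    calc rieszEnergy s ω ≤ ∑ _x ∈ ω, ∑ _y ∈ ω, σ^(-s) := by
          unfold rieszEnergy
          exact Finset.sum_le_sum fun x hx => Finset.sum_le_sum fun y hy => hterm x hx y hy
      _ = σ^(-s) * (M:ℝ)^2 := by
          rw [Finset.sum_const, Finset.sum_const, hcard]
          simp [nsmul_eq_mul]
          ring
  exact le_trans (minRieszEnergy_le hsub hcard) hbound

lemma minRiesz_step {M : ℕ} (hM : 2 ≤ M) {r σ s : ℝ} (hr : 0 < r) (hσ : 0 < σ)
    (hs : 0 < s) {A : Set E} {ψ : Fin M → E → E}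
    (hψ : ∀ m x y, dist (ψ m x) (ψ m y) = r * dist x y)
    (hfix : A = ⋃ m, ψ m '' A)
    (hsep : ∀ i j, i ≠ j → ∀ x ∈ ψ i '' A, ∀ y ∈ ψ j '' A, σ ≤ dist x y)
    (hInf : A.Infinite) (N : ℕ) :
    minRieszEnergy s A (M * N) ≤
      (M:ℝ) * r^(-s) * minRieszEnergy s A N + σ^(-s) * ((M:ℝ) * (N:ℝ))^2 := by
  classical
  have hinv : ∀ m, ψ m '' A ⊆ A := by
    intro m x hx
    rw [hfix]
    exact Set.mem_iUnion.mpr ⟨m, hx⟩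
  set a : ℝ := (M:ℝ) * r^(-s) with ha
  set b : ℝ := σ^(-s) * ((M:ℝ) * (N:ℝ))^2 with hb
  have hapos : 0 < a := by
    rw [ha]
    have : (0:ℝ) < (M:ℝ) := by positivity
    positivity
  have hkey : ∀ ω : Finset E, ↑ω ⊆ A → ω.card = N →
      minRieszEnergy s A (M * N) ≤ a * rieszEnergy s ω + b := by
    intro ω hωA hωcard
    set ω' : Finset E := Finset.biUnion Finset.univ (fun m => ω.image (ψ m)) with hω'
    have hmem : ∀ m : Fin M, ∀ x, x ∈ ω.image (ψ m) → x ∈ ψ m '' A := by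
      intro m x hx
      obtain ⟨c, hc, rfl⟩ := Finset.mem_image.mp hx
      exact ⟨c, hωA hc, rfl⟩
    have hdisj : ∀ i ∈ (Finset.univ : Finset (Fin M)), ∀ j ∈ Finset.univ, i ≠ j →
        Disjoint (ω.image (ψ i)) (ω.image (ψ j)) := by
      intro i _ j _ hij
      rw [Finset.disjoint_left]
      intro x hxi hxj
      have := hsep i j hij x (hmem i x hxi) x (hmem j x hxj)
      rw [dist_self] at this
      linarith
    have hsub' : ↑ω' ⊆ A := by
      intro x hx
      rw [hω'] at hx
      simp only [Finset.coe_biUnion, Set.mem_iUnion] at hx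
      obtain ⟨m, -, hx⟩ := hx
      exact hinv m (hmem m x hx)
    have hcard' : ω'.card = M * N := by
      rw [hω', Finset.card_biUnion hdisj]
      have : ∀ m : Fin M, (ω.image (ψ m)).card = N := fun m => by
        rw [Finset.card_image_of_injective _ (psi_injective hr hψ m), hωcard]
      rw [Finset.sum_congr rfl fun m _ => this m, Finset.sum_const, Finset.card_univ,
        Fintype.card_fin, smul_eq_mul]
    -- energy bound
    have hE : rieszEnergy s ω' ≤ a * rieszEnergy s ω + b := by
      set eN : E → ℝ := fun c => ∑ b' ∈ ω, if c ≠ b' then dist c b' ^ (-s) else 0 with heN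
      have heNnn : ∀ c, 0 ≤ eN c := by
        intro c
        refine Finset.sum_nonneg fun b' _ => ?_
        split_ifs
        · exact Real.rpow_nonneg dist_nonneg _
        · exact le_rfl
      have hpd : Set.PairwiseDisjoint (↑(Finset.univ : Finset (Fin M)) : Set (Fin M))
          (fun m => ω.image (ψ m)) := by
        intro i hi j hj hij
        exact hdisj i (Finset.mem_univ i) j (Finset.mem_univ j) hij
      have hinj' : ∀ m : Fin M, ∀ x ∈ ω, ∀ y ∈ ω, ψ m x = ψ m y → x = y :=
        fun m x _ y _ h => psi_injective hr hψ m h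
      have hEexp : rieszEnergy s ω' = ∑ i : Fin M, ∑ c ∈ ω, ∑ j : Fin M, ∑ b' ∈ ω,
          (if ψ i c ≠ ψ j b' then dist (ψ i c) (ψ j b') ^ (-s) else 0) := by
        unfold rieszEnergy
        rw [hω', Finset.sum_biUnion hpd]
        refine Finset.sum_congr rfl fun i _ => ?_
        rw [Finset.sum_image (hinj' i)]
        refine Finset.sum_congr rfl fun c _ => ?_
        rw [Finset.sum_biUnion hpd]
        refine Finset.sum_congr rfl fun j _ => ?_
        rw [Finset.sum_image (hinj' j)]
      have hinner : ∀ i : Fin M, ∀ c ∈ ω, (∑ j : Fin M, ∑ b' ∈ ω,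
          (if ψ i c ≠ ψ j b' then dist (ψ i c) (ψ j b') ^ (-s) else 0)) ≤
          r^(-s) * eN c + (M:ℝ) * ((N:ℝ) * σ^(-s)) := by
        intro i c hc
        have hsame : (∑ b' ∈ ω, if ψ i c ≠ ψ i b' then dist (ψ i c) (ψ i b') ^ (-s) else 0)
            = r^(-s) * eN c := by
          rw [heN, Finset.mul_sum]
          refine Finset.sum_congr rfl fun b' hb' => ?_
          by_cases hcb : c = b'
          · subst hcb; simp
          · have h1 : ψ i c ≠ ψ i b' := fun h => hcb (psi_injective hr hψ i h)
            rw [if_pos h1, if_pos hcb, hψ, Real.mul_rpow hr.le dist_nonneg]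
        have hcross : ∀ j : Fin M, j ≠ i →
            (∑ b' ∈ ω, if ψ i c ≠ ψ j b' then dist (ψ i c) (ψ j b') ^ (-s) else 0) ≤
            (N:ℝ) * σ^(-s) := by
          intro j hj
          calc (∑ b' ∈ ω, if ψ i c ≠ ψ j b' then dist (ψ i c) (ψ j b') ^ (-s) else 0)
              ≤ ∑ _b' ∈ ω, σ^(-s) := by
                refine Finset.sum_le_sum fun b' hb' => ?_
                split_ifs
                · refine Real.rpow_le_rpow_of_nonpos hσ ?_ (neg_nonpos.mpr hs.le)
                  exact hsep i j (Ne.symm hj) _ ⟨c, hωA hc, rfl⟩ _ ⟨b', hωA hb', rfl⟩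
                · positivity
            _ = (N:ℝ) * σ^(-s) := by rw [Finset.sum_const, hωcard, nsmul_eq_mul]
        calc (∑ j : Fin M, ∑ b' ∈ ω,
              (if ψ i c ≠ ψ j b' then dist (ψ i c) (ψ j b') ^ (-s) else 0))
            = (∑ b' ∈ ω, if ψ i c ≠ ψ i b' then dist (ψ i c) (ψ i b') ^ (-s) else 0) +
              ∑ j ∈ Finset.univ.erase i, ∑ b' ∈ ω,
                (if ψ i c ≠ ψ j b' then dist (ψ i c) (ψ j b') ^ (-s) else 0) :=
              (Finset.add_sum_erase _ _ (Finset.mem_univ i)).symm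
          _ ≤ r^(-s) * eN c + ∑ _j ∈ Finset.univ.erase i, (N:ℝ) * σ^(-s) := by
              refine add_le_add (le_of_eq hsame) (Finset.sum_le_sum fun j hj => ?_)
              exact hcross j (Finset.ne_of_mem_erase hj)
          _ ≤ r^(-s) * eN c + (M:ℝ) * ((N:ℝ) * σ^(-s)) := by
              rw [Finset.sum_const, Finset.card_erase_of_mem (Finset.mem_univ i),
                Finset.card_univ, Fintype.card_fin, nsmul_eq_mul]
              have h1 : ((M - 1 : ℕ) : ℝ) ≤ (M:ℝ) := Nat.cast_le.mpr (Nat.sub_le M 1)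
              have h2 : (0:ℝ) ≤ (N:ℝ) * σ^(-s) := by positivity
              nlinarith
      have hEω : (∑ c ∈ ω, eN c) = rieszEnergy s ω := by
        rw [heN]; rfl
      calc rieszEnergy s ω' = ∑ i : Fin M, ∑ c ∈ ω, ∑ j : Fin M, ∑ b' ∈ ω,
            (if ψ i c ≠ ψ j b' then dist (ψ i c) (ψ j b') ^ (-s) else 0) := hEexp
        _ ≤ ∑ _i : Fin M, ∑ c ∈ ω, (r^(-s) * eN c + (M:ℝ) * ((N:ℝ) * σ^(-s))) :=
            Finset.sum_le_sum fun i _ => Finset.sum_le_sum fun c hc => hinner i c hc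
        _ = a * rieszEnergy s ω + b := by
            rw [Finset.sum_const, Finset.card_univ, Fintype.card_fin]
            rw [Finset.sum_add_distrib, Finset.sum_const, ← Finset.mul_sum, hEω, hωcard]
            rw [ha, hb]
            push_cast
            ring
    exact le_trans (minRieszEnergy_le hsub' hcard') hE
  have h2 : ∀ ω : Finset E, ↑ω ⊆ A → ω.card = N →
      (minRieszEnergy s A (M * N) - b) / a ≤ rieszEnergy s ω := by
    intro ω h1' h2'
    rw [div_le_iff₀ hapos]
    have := hkey ω h1' h2'
    linarith [this]
  have h3 := le_minRieszEnergy hInf h2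
  rw [div_le_iff₀ hapos] at h3
  linarith

end upper

set_option maxHeartbeats 1000000 in
/-- for s large enough, the normalized minimal energies along the two
subsequences have limsup < liminf, hence liminf_N < limsup_N and the limit does not exist. -/
theorem statement14 {p : ℕ} (s d r σ : ℝ) (M : ℕ) (hM : 2 ≤ M) (hr : 0 < r) (hr1 : r < 1)
    (hσ : 0 < σ) (A : Set (EuclideanSpace ℝ (Fin p))) (hA : IsCompact A)
    (ψ : Fin M → EuclideanSpace ℝ (Fin p) → EuclideanSpace ℝ (Fin p))
    (hψ : ∀ m x y, dist (ψ m x) (ψ m y) = r * dist x y)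
    (hfix : A = ⋃ m, ψ m '' A)
    (hsep : ∀ i j, i ≠ j → ∀ x ∈ ψ i '' A, ∀ y ∈ ψ j '' A, σ ≤ dist x y)
    (hdiam : Metric.diam A = 1)
    (hd : d = Real.log M / Real.log (1 / r))
    (hR : (r / σ) * (1 + r ^ d) ^ (1 / d) < 1)
    (hs : max (2 * d)
      (Real.logb (((r / σ) * (1 + r ^ d) ^ (1 / d))⁻¹) (2 * M * (M + 1))) ≤ s) :
    limsup (fun k : ℕ => minRieszEnergy s A (M ^ (k + 1)) /
        ((M ^ (k + 1) : ℕ) : ℝ) ^ (1 + s / d)) atTop <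
      liminf (fun k : ℕ => minRieszEnergy s A (M ^ (k + 1) + M ^ k) /
        ((M ^ (k + 1) + M ^ k : ℕ) : ℝ) ^ (1 + s / d)) atTop ∧
    liminf (fun N : ℕ => minRieszEnergy s A N / (N : ℝ) ^ (1 + s / d)) atTop <
      limsup (fun N : ℕ => minRieszEnergy s A N / (N : ℝ) ^ (1 + s / d)) atTop ∧
    ¬ ∃ L : ℝ, Tendsto (fun N : ℕ => minRieszEnergy s A N / (N : ℝ) ^ (1 + s / d))
      atTop (nhds L) := by
  classical
  have hMR : (2:ℝ) ≤ (M:ℝ) := by exact_mod_cast hM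
  have hM1 : (1:ℝ) < (M:ℝ) := by linarith only [hMR]
  have hMpos : (0:ℝ) < (M:ℝ) := by linarith only [hMR]
  have hM1p : (0:ℝ) < (M:ℝ) + 1 := by linarith only [hMR]
  have hrinv : (1:ℝ) < 1/r := by rw [lt_div_iff₀ hr]; linarith only [hr1]
  have hlogM : 0 < Real.log M := Real.log_pos hM1
  have hlogr : 0 < Real.log (1/r) := Real.log_pos hrinv
  have hdpos : 0 < d := by rw [hd]; positivity
  have hs2d : 2*d ≤ s := le_trans (le_max_left _ _) hs
  have hspos : 0 < s := by linarith only [hs2d, hdpos]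
  have hsd2 : 2 ≤ s/d := by rw [le_div_iff₀ hdpos]; linarith only [hs2d]
  -- exponent identities
  have hMr : ((1/r):ℝ) ^ d = (M:ℝ) := by
    rw [Real.rpow_def_of_pos (by positivity), hd]
    rw [show Real.log (1/r) * (Real.log M / Real.log (1/r)) = Real.log M by
      field_simp]
    exact Real.exp_log hMpos
  have hrs : r ^ (-s) = (M:ℝ) ^ (s/d) := by
    rw [← hMr, ← Real.rpow_mul (by positivity : (0:ℝ) ≤ 1/r)]
    rw [show d * (s/d) = s by field_simp]
    rw [one_div, Real.inv_rpow hr.le, ← Real.rpow_neg hr.le]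
  have hrd : r ^ d = ((M:ℝ))⁻¹ := by
    have h1 : r ^ d * (1/r)^d = 1 := by
      rw [← Real.mul_rpow hr.le (by positivity)]
      rw [mul_one_div, div_self (ne_of_gt hr), Real.one_rpow]
    rw [hMr] at h1
    rw [inv_eq_one_div, eq_div_iff (ne_of_gt hMpos)]
    linarith only [h1]
  set t : ℝ := (M:ℝ)^(s/d) with ht
  have htpos : 0 < t := Real.rpow_pos_of_pos hMpos _
  have h22 : (M:ℝ)^(2:ℝ) = (M:ℝ)^2 := by
    rw [show (2:ℝ) = ((2:ℕ):ℝ) by norm_num, Real.rpow_natCast]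
  have ht2 : (M:ℝ)^2 ≤ t := by
    rw [← h22]
    exact Real.rpow_le_rpow_of_exponent_le hM1.le hsd2
  set q : ℝ := (M:ℝ)^(1 - s/d) with hqdef
  have hqpos : 0 < q := Real.rpow_pos_of_pos hMpos _
  have hq1 : q < 1 := Real.rpow_lt_one_of_one_lt_of_neg hM1 (by linarith only [hsd2, hdpos])
  have hqt : q * t = (M:ℝ) := by
    rw [hqdef, ht, ← Real.rpow_add hMpos]
    rw [show 1 - s/d + s/d = 1 by ring, Real.rpow_one]
  have h1q : 0 < 1 - q := by linarith only [hq1]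
  set α : ℝ := 1 + s/d with hα
  have hαpos : 0 < α := by rw [hα]; positivity
  set T : ℝ := (M:ℝ)^α with hT
  have hTpos : 0 < T := Real.rpow_pos_of_pos hMpos _
  have hMT : (M:ℝ) * t = T := by
    rw [ht, hT, hα, Real.rpow_add hMpos, Real.rpow_one]
  have hTq : T * q = (M:ℝ)^2 := by
    rw [hT, hqdef, ← Real.rpow_add hMpos, hα]
    rw [show 1 + s/d + (1 - s/d) = 2 by ring, h22]
  -- base change helper
  have hba : ∀ (x:ℝ), 0 < x → ∀ (y:ℝ) (n : ℕ), (x^n)^y = (x^y)^n := by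
    intro x hx y n
    rw [← Real.rpow_natCast x n, ← Real.rpow_mul hx.le, mul_comm,
      Real.rpow_mul hx.le, Real.rpow_natCast]
  -- A facts
  have hAb : Bornology.IsBounded A := hA.isBounded
  have hAne : A.Nonempty := by
    by_contra h
    rw [Set.not_nonempty_iff_eq_empty] at h
    rw [h, Metric.diam_empty] at hdiam
    norm_num at hdiam
  have hInf : A.Infinite := A_infinite hM hr hσ hψ hfix hsep hAne
  have hσsp : 0 < σ^(-s) := Real.rpow_pos_of_pos hσ _
  set C : ℝ := σ^(-s) * q / (1-q) with hC
  have hCpos : 0 < C := by rw [hC]; positivity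
  -- upper bound along M^(k+1)
  have hup : ∀ k : ℕ, minRieszEnergy s A (M^(k+1)) ≤
      σ^(-s) * (T^(k+1) * (q - q^(k+2)) / (1-q)) := by
    intro k
    induction k with
    | zero =>
        have hb := energy_upper_base hM hr hσ hspos hψ hfix hsep hAne
        have heq : σ^(-s) * (T^(0+1) * (q - q^(0+2)) / (1-q)) = σ^(-s) * (M:ℝ)^2 := by
          rw [← hTq]
          field_simp
          ring
        rw [heq]
        simpa [pow_one] using hb
    | succ k ih =>
        have hstep := minRiesz_step hM hr hσ hspos hψ hfix hsep hInf (M^(k+1))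
        rw [show M * M^(k+1) = M^(k+1+1) by ring] at hstep
        have hc1 : ((M^(k+1):ℕ):ℝ) = (M:ℝ)^(k+1) := by push_cast; ring
        rw [hc1] at hstep
        have hmul : (M:ℝ) * r^(-s) * (σ^(-s) * (T^(k+1) * (q - q^(k+2)) / (1-q)))
            + σ^(-s) * ((M:ℝ) * (M:ℝ)^(k+1))^2
            = σ^(-s) * (T^(k+1+1) * (q - q^(k+1+2)) / (1-q)) := by
          have e2 : ((M:ℝ) * (M:ℝ)^(k+1))^2 = T^(k+2) * q^(k+2) := by
            calc ((M:ℝ) * (M:ℝ)^(k+1))^2 = ((M:ℝ)^2)^(k+2) := by ring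
              _ = (T*q)^(k+2) := by rw [hTq]
              _ = T^(k+2) * q^(k+2) := mul_pow _ _ _
          rw [e2, hrs, hMT]
          field_simp
          ring
        calc minRieszEnergy s A (M^(k+1+1))
            ≤ (M:ℝ) * r^(-s) * minRieszEnergy s A (M^(k+1))
              + σ^(-s) * ((M:ℝ) * (M:ℝ)^(k+1))^2 := hstep
          _ ≤ (M:ℝ) * r^(-s) * (σ^(-s) * (T^(k+1) * (q - q^(k+2)) / (1-q)))
              + σ^(-s) * ((M:ℝ) * (M:ℝ)^(k+1))^2 := by
              have hpos : (0:ℝ) ≤ (M:ℝ) * r^(-s) := by positivity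
              exact add_le_add_left (mul_le_mul_of_nonneg_left ih hpos) _
          _ = σ^(-s) * (T^(k+1+1) * (q - q^(k+1+2)) / (1-q)) := hmul
  -- denominators
  have hdenom1 : ∀ k : ℕ, ((M^(k+1):ℕ):ℝ)^α = T^(k+1) := by
    intro k
    rw [show ((M^(k+1):ℕ):ℝ) = (M:ℝ)^(k+1) by push_cast; ring, hba (M:ℝ) hMpos α (k+1), ← hT]
  have hdenom2 : ∀ k : ℕ, ((M^(k+1)+M^k:ℕ):ℝ)^α = T^k * ((M:ℝ)+1)^α := by
    intro k
    rw [show ((M^(k+1)+M^k:ℕ):ℝ) = (M:ℝ)^k * ((M:ℝ)+1) by push_cast; ring]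
    rw [Real.mul_rpow (by positivity) hM1p.le, hba (M:ℝ) hMpos α k, ← hT]
  -- normalized upper bound
  have hu1C : ∀ k : ℕ, minRieszEnergy s A (M^(k+1)) / ((M^(k+1):ℕ):ℝ)^α ≤ C := by
    intro k
    rw [hdenom1 k, div_le_iff₀ (by positivity)]
    calc minRieszEnergy s A (M^(k+1)) ≤ σ^(-s) * (T^(k+1) * (q - q^(k+2)) / (1-q)) := hup k
      _ ≤ σ^(-s) * (T^(k+1) * q / (1-q)) := by
          gcongr σ^(-s) * (T^(k+1) * ?_ / (1-q))
          exact sub_le_self q (pow_nonneg hqpos.le (k+2))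
      _ = C * T^(k+1) := by rw [hC]; ring
  -- lower bound along M^(k+1) + M^k
  set c' : ℝ := 2*t / (((M:ℝ)+1)^α) with hc'
  have hc'pos : 0 < c' := by rw [hc']; positivity
  have hm_low : ∀ k : ℕ, 2*(M:ℝ)^k * t^(k+1) ≤ minRieszEnergy s A (M^(k+1)+M^k) := by
    intro k
    refine le_minRieszEnergy hInf fun ω hω hcard => ?_
    have h := energy_lower hM hr hspos hAb hdiam.le hψ hfix (k+1) ω hω
    calc 2*(M:ℝ)^k * t^(k+1)
        = 2*(((ω.card:ℕ):ℝ) - (M:ℝ)^(k+1)) * ((r^(k+1):ℝ))^(-s) := by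
          rw [hcard, hba r hr (-s) (k+1), hrs]
          push_cast
          ring
      _ ≤ rieszEnergy s ω := h
  have hu2c : ∀ k : ℕ, c' ≤
      minRieszEnergy s A (M^(k+1)+M^k) / ((M^(k+1)+M^k:ℕ):ℝ)^α := by
    intro k
    rw [hdenom2 k]
    have heq : c' = (2*(M:ℝ)^k * t^(k+1)) / (T^k * ((M:ℝ)+1)^α) := by
      rw [hc']
      have hnum : 2*(M:ℝ)^k * t^(k+1) = 2*t*T^k := by rw [← hMT]; ring
      rw [hnum]
      rw [div_eq_div_iff (by positivity) (by positivity)]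
      ring
    rw [heq]
    gcongr
    exact hm_low k
  -- the crucial strict inequality C < c'
  set Rv : ℝ := (r/σ) * (1 + r^d)^(1/d) with hRv
  have hrdpos : (0:ℝ) < r^d := Real.rpow_pos_of_pos hr d
  have h1rdpos : (0:ℝ) < 1 + r^d := by linarith only [hrdpos]
  have hRvpos : 0 < Rv := by rw [hRv]; positivity
  have hB1 : 1 < Rv⁻¹ := by
    rw [lt_inv_comm₀ zero_lt_one hRvpos]
    simpa using hR
  set X : ℝ := 2*(M:ℝ)*((M:ℝ)+1) with hX
  have hXpos : 0 < X := by rw [hX]; positivity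
  have hRs : Rv^s ≤ X⁻¹ := by
    have h1 : Real.logb (Rv⁻¹) X ≤ s := le_trans (le_max_right _ _) hs
    have h2 : X ≤ (Rv⁻¹)^s := by
      calc X = (Rv⁻¹) ^ Real.logb (Rv⁻¹) X :=
            (Real.rpow_logb (by positivity) (ne_of_gt hB1) hXpos).symm
        _ ≤ (Rv⁻¹)^s := Real.rpow_le_rpow_of_exponent_le hB1.le h1
    have h3 : Rv^s = ((Rv⁻¹)^s)⁻¹ := by
      rw [Real.inv_rpow hRvpos.le, inv_inv]
    rw [h3]
    exact inv_anti₀ hXpos h2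
  have hα_split : ((M:ℝ)+1)^α = ((M:ℝ)+1) * ((M:ℝ)+1)^(s/d) := by
    rw [hα, Real.rpow_add hM1p, Real.rpow_one]
  have h1rd : 1 + r^d = ((M:ℝ)+1)/(M:ℝ) := by
    rw [hrd]; field_simp
  have hRvs : Rv^s = (r/σ)^s * (((M:ℝ)+1)^(s/d) / t) := by
    rw [hRv, Real.mul_rpow (by positivity) (by positivity)]
    congr 1
    rw [← Real.rpow_mul h1rdpos.le, show (1/d)*s = s/d by field_simp, h1rd,
      Real.div_rpow hM1p.le hMpos.le, ← ht]
  have hσs_eq : σ^(-s) = (r/σ)^s * t := by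
    have hrsp : (0:ℝ) < r^s := Real.rpow_pos_of_pos hr s
    have hσsp2 : (0:ℝ) < σ^s := Real.rpow_pos_of_pos hσ s
    rw [← hrs]
    rw [Real.div_rpow hr.le hσ.le, Real.rpow_neg hσ.le, Real.rpow_neg hr.le]
    field_simp
  have hrσpos : (0:ℝ) < (r/σ)^s := Real.rpow_pos_of_pos (by positivity) s
  have e1 : σ^(-s) * q * (((M:ℝ)+1)^α) = Rv^s * (((M:ℝ)+1) * ((M:ℝ) * t)) := by
    rw [hσs_eq, hα_split, hRvs, ← hqt]
    field_simp
  have hCc : C < c' := by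
    rw [hC, hc', div_lt_div_iff₀ h1q (by positivity)]
    calc σ^(-s) * q * ((M:ℝ)+1)^α = Rv^s * (((M:ℝ)+1) * ((M:ℝ) * t)) := e1
      _ ≤ X⁻¹ * (((M:ℝ)+1) * ((M:ℝ) * t)) := by
          apply mul_le_mul_of_nonneg_right hRs
          positivity
      _ = t/2 := by
          rw [hX]
          field_simp
      _ < 2*t*(1-q) := by
          have h5 : 2*t*(1-q) = 2*t - 2*(M:ℝ) := by rw [← hqt]; ring
          have h6 : 2*(M:ℝ) ≤ (M:ℝ)^2 := by
            have h7 := mul_le_mul_of_nonneg_left hMR (by linarith only [hMR] : (0:ℝ) ≤ (M:ℝ))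
            calc 2*(M:ℝ) = (M:ℝ)*2 := by ring
              _ ≤ (M:ℝ)*(M:ℝ) := h7
              _ = (M:ℝ)^2 := by ring
          rw [h5]
          linarith only [ht2, htpos, h6]
  -- global upper bound (for boundedness of the full sequence)
  set D : ℝ := C * (M:ℝ)^α with hD
  have hvub : ∀ N : ℕ, 1 ≤ N → minRieszEnergy s A N / (N:ℝ)^α ≤ D := by
    intro N hN
    have hNpos : (0:ℝ) < (N:ℝ) := by exact_mod_cast hN
    rw [div_le_iff₀ (Real.rpow_pos_of_pos hNpos α)]
    set k : ℕ := Nat.log M N with hk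
    have h1 : N ≤ M^(k+1) := (Nat.lt_pow_succ_log_self (by omega : 1 < M) N).le
    have h2 : M^(k+1) ≤ M*N := by
      have := Nat.pow_log_le_self M (by omega : N ≠ 0)
      calc M^(k+1) = M * M^k := by ring
        _ ≤ M*N := Nat.mul_le_mul_left M this
    have hmono := minRieszEnergy_mono (s := s) hInf h1
    have hup2 : minRieszEnergy s A (M^(k+1)) ≤ C * T^(k+1) := by
      calc minRieszEnergy s A (M^(k+1)) ≤ σ^(-s) * (T^(k+1) * (q - q^(k+2)) / (1-q)) := hup k
        _ ≤ σ^(-s) * (T^(k+1) * q / (1-q)) := by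
            gcongr σ^(-s) * (T^(k+1) * ?_ / (1-q))
            exact sub_le_self q (pow_nonneg hqpos.le (k+2))
        _ = C * T^(k+1) := by rw [hC]; ring
    have hT3 : T^(k+1) ≤ (M:ℝ)^α * (N:ℝ)^α := by
      have hcast2 : ((M:ℝ))^(k+1) ≤ (M:ℝ) * (N:ℝ) := by
        calc ((M:ℝ))^(k+1) = ((M^(k+1):ℕ):ℝ) := by push_cast; ring
          _ ≤ ((M*N:ℕ):ℝ) := by exact_mod_cast h2
          _ = (M:ℝ)*(N:ℝ) := by push_cast; ring
      calc T^(k+1) = ((M:ℝ)^(k+1))^α := (hba (M:ℝ) hMpos α (k+1)).symm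
        _ ≤ ((M:ℝ)*(N:ℝ))^α := Real.rpow_le_rpow (by positivity) hcast2 hαpos.le
        _ = (M:ℝ)^α * (N:ℝ)^α := Real.mul_rpow hMpos.le hNpos.le
    calc minRieszEnergy s A N ≤ minRieszEnergy s A (M^(k+1)) := hmono
      _ ≤ C * T^(k+1) := hup2
      _ ≤ C * ((M:ℝ)^α * (N:ℝ)^α) := mul_le_mul_of_nonneg_left hT3 hCpos.le
      _ = D * (N:ℝ)^α := by rw [hD]; ring
  have hvnn : ∀ N : ℕ, 0 ≤ minRieszEnergy s A N / (N:ℝ)^α := by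
    intro N
    apply div_nonneg (minRieszEnergy_nonneg s A N hInf)
    exact Real.rpow_nonneg (Nat.cast_nonneg N) α
  -- part 1
  have part1 : limsup (fun k : ℕ => minRieszEnergy s A (M ^ (k + 1)) /
      ((M ^ (k + 1) : ℕ) : ℝ) ^ α) atTop <
      liminf (fun k : ℕ => minRieszEnergy s A (M ^ (k + 1) + M ^ k) /
      ((M ^ (k + 1) + M ^ k : ℕ) : ℝ) ^ α) atTop := by
    have hb1 : IsBoundedUnder (· ≥ ·) atTop (fun k : ℕ => minRieszEnergy s A (M ^ (k + 1)) /
        ((M ^ (k + 1) : ℕ) : ℝ) ^ α) :=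
      Filter.isBoundedUnder_of ⟨0, fun k => hvnn _⟩
    have hb2 : IsBoundedUnder (· ≤ ·) atTop (fun k : ℕ => minRieszEnergy s A (M ^ (k + 1) + M ^ k) /
        ((M ^ (k + 1) + M ^ k : ℕ) : ℝ) ^ α) :=
      Filter.isBoundedUnder_of ⟨D, fun k => hvub _ (le_trans (Nat.one_le_pow _ _ (by omega)) (Nat.le_add_right _ _))⟩
    calc limsup (fun k : ℕ => minRieszEnergy s A (M ^ (k + 1)) /
          ((M ^ (k + 1) : ℕ) : ℝ) ^ α) atTop ≤ C :=
          limsup_le_of_le hb1.isCoboundedUnder_le (Filter.Eventually.of_forall hu1C)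
      _ < c' := hCc
      _ ≤ liminf (fun k : ℕ => minRieszEnergy s A (M ^ (k + 1) + M ^ k) /
          ((M ^ (k + 1) + M ^ k : ℕ) : ℝ) ^ α) atTop :=
          le_liminf_of_le hb2.isCoboundedUnder_ge (Filter.Eventually.of_forall hu2c)
  -- part 2
  have hbv1 : IsBoundedUnder (· ≥ ·) atTop
      (fun N : ℕ => minRieszEnergy s A N / (N:ℝ)^α) :=
    Filter.isBoundedUnder_of ⟨0, fun N => hvnn N⟩
  have hbv2 : IsBoundedUnder (· ≤ ·) atTop
      (fun N : ℕ => minRieszEnergy s A N / (N:ℝ)^α) := by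
    refine ⟨D, ?_⟩
    rw [Filter.eventually_map]
    exact Filter.eventually_atTop.mpr ⟨1, fun N hN => hvub N hN⟩
  have hfreq1 : ∃ᶠ N in atTop, minRieszEnergy s A N / (N:ℝ)^α ≤ C := by
    rw [Filter.frequently_atTop]
    intro a
    refine ⟨M^(a+1), ?_, ?_⟩
    · calc a ≤ M^a := (Nat.lt_pow_self (n := a) (by omega : 1 < M)).le
        _ ≤ M^(a+1) := Nat.pow_le_pow_right (by omega) (by omega)
    · exact hu1C a
  have hfreq2 : ∃ᶠ N in atTop, c' ≤ minRieszEnergy s A N / (N:ℝ)^α := by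
    rw [Filter.frequently_atTop]
    intro a
    refine ⟨M^(a+1) + M^a, ?_, ?_⟩
    · calc a ≤ M^a := (Nat.lt_pow_self (n := a) (by omega : 1 < M)).le
        _ ≤ M^(a+1) + M^a := Nat.le_add_left _ _
    · exact hu2c a
  have part2 : liminf (fun N : ℕ => minRieszEnergy s A N / (N:ℝ)^α) atTop <
      limsup (fun N : ℕ => minRieszEnergy s A N / (N:ℝ)^α) atTop := by
    calc liminf (fun N : ℕ => minRieszEnergy s A N / (N:ℝ)^α) atTop ≤ C :=
          liminf_le_of_frequently_le hfreq1 hbv1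
      _ < c' := hCc
      _ ≤ limsup (fun N : ℕ => minRieszEnergy s A N / (N:ℝ)^α) atTop :=
          le_limsup_of_frequently_le hfreq2 hbv2
  refine ⟨part1, part2, ?_⟩
  rintro ⟨L, hL⟩
  rw [hL.liminf_eq, hL.limsup_eq] at part2
  exact lt_irrefl L part2
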